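/- Let F : ℝ^M × Ω → ℝ with θ ↦ F(θ, H) mean-square L-Lipschitz, U ∼ N(0, I_M) independent of H, and μ > 0. Then for every θ, E[ ‖((F(θ + μU, H) − F(θ, H))/μ)·U‖₂² ] ≤ L²·E[‖U‖₂⁴] ≤ L²(M+4)². -/

import Mathlib

/-!
Condition on `U = u`: by independence the inner expectation over `H` is
`‖u‖² / μ² · E (F (θ + μ u, H) - F (θ, H))² ≤ L² ‖u‖⁴` by the mean-square Lipschitz bound, so the
second moment is at most `L² E ‖U‖⁴`. Expanding `‖U‖⁴ = ∑ᵢ ∑ⱼ Uᵢ² Uⱼ²` and using the Gaussian moments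
`E X² = 1`, `E X⁴ = 3` (derivatives of the moment generating function `exp (t² / 2)` at `0`) gives
`E ‖U‖⁴ = M² + 2 M ≤ (M + 4)²`.
-/

open MeasureTheory ProbabilityTheory Real
open scoped NNReal

/-- The standard Gaussian measure `N(0, I_M)` on `ℝ^M`. -/
noncomputable def stdGaussian (M : ℕ) : Measure (EuclideanSpace ℝ (Fin M)) :=
  (Measure.pi fun _ : Fin M => gaussianReal 0 1).map (WithLp.toLp 2)

lemma hasDerivAt_mul_exp_sq_half {p : ℝ → ℝ} {p' t : ℝ} (hp : HasDerivAt p p' t) :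
    HasDerivAt (fun s => p s * rexp (s ^ 2 / 2)) ((p' + t * p t) * rexp (t ^ 2 / 2)) t := by
  have he : HasDerivAt (fun s => rexp (s ^ 2 / 2)) (t * rexp (t ^ 2 / 2)) t := by
    convert ((hasDerivAt_pow 2 t).div_const 2).exp using 1
    push_cast; ring
  exact (hp.fun_mul he).congr_deriv (by ring)

lemma deriv_mul_exp_sq_half {p p' : ℝ → ℝ} (hp : ∀ t, HasDerivAt p (p' t) t) :
    deriv (fun s => p s * rexp (s ^ 2 / 2)) = fun t => (p' t + t * p t) * rexp (t ^ 2 / 2) :=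
  funext fun t => (hasDerivAt_mul_exp_sq_half (hp t)).deriv

lemma iteratedDeriv_two_exp_sq_half :
    iteratedDeriv 2 (fun t => rexp (t ^ 2 / 2)) = fun t => (1 + t ^ 2) * rexp (t ^ 2 / 2) := by
  have hderiv : deriv (fun t => rexp (t ^ 2 / 2)) = fun t => t * rexp (t ^ 2 / 2) := by
    simpa using deriv_mul_exp_sq_half (fun t => hasDerivAt_const t (1 : ℝ))
  rw [iteratedDeriv_succ, iteratedDeriv_one, hderiv,
    deriv_mul_exp_sq_half (p := fun s => s) (fun t => hasDerivAt_id' t)]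
  funext t; ring

lemma iteratedDeriv_four_exp_sq_half :
    iteratedDeriv 4 (fun t => rexp (t ^ 2 / 2)) =
      fun t => (3 + 6 * t ^ 2 + t ^ 4) * rexp (t ^ 2 / 2) := by
  have hp : ∀ t : ℝ, HasDerivAt (fun s => 1 + s ^ 2) (2 * t) t := fun t => by
    simpa using (hasDerivAt_pow 2 t).const_add 1
  have hq : ∀ t : ℝ, HasDerivAt (fun s => 3 * s + s ^ 3) (3 + 3 * t ^ 2) t := fun t => by
    simpa using ((hasDerivAt_id' t).const_mul 3).fun_add (hasDerivAt_pow 3 t)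
  rw [iteratedDeriv_succ, iteratedDeriv_succ, iteratedDeriv_two_exp_sq_half,
    deriv_mul_exp_sq_half hp]
  have hthird : (fun t => (2 * t + t * (1 + t ^ 2)) * rexp (t ^ 2 / 2)) =
      fun t => (3 * t + t ^ 3) * rexp (t ^ 2 / 2) := by
    funext t; ring
  rw [hthird, deriv_mul_exp_sq_half hq]
  funext t; ring

lemma integral_pow_gaussianReal_eq_iteratedDeriv (μ : ℝ) (v : ℝ≥0) (n : ℕ) :
    ∫ x, x ^ n ∂gaussianReal μ v = iteratedDeriv n (fun t => rexp (μ * t + v * t ^ 2 / 2)) 0 := by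
  simpa [mgf_fun_id_gaussianReal] using
    (iteratedDeriv_mgf_zero (X := fun x : ℝ => x) (μ := gaussianReal μ v) (by simp) n).symm

lemma integral_sq_gaussianReal_zero_one : ∫ x, x ^ 2 ∂gaussianReal 0 1 = 1 := by
  simp [integral_pow_gaussianReal_eq_iteratedDeriv, iteratedDeriv_two_exp_sq_half]

lemma integral_pow_four_gaussianReal_zero_one : ∫ x, x ^ 4 ∂gaussianReal 0 1 = 3 := by
  simp [integral_pow_gaussianReal_eq_iteratedDeriv, iteratedDeriv_four_exp_sq_half]

lemma integrable_pow_gaussianReal (μ : ℝ) (v : ℝ≥0) (n : ℕ) :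
    Integrable (fun x => x ^ n) (gaussianReal μ v) :=
  integrable_pow_of_mem_interior_integrableExpSet (X := fun x => x) (by simp) n

section StdGaussian

variable {M : ℕ}

lemma integrable_prod_pow_stdGaussian (a : Fin M → ℕ) :
    Integrable (fun u : EuclideanSpace ℝ (Fin M) => ∏ k, u k ^ a k) (stdGaussian M) := by
  rw [_root_.stdGaussian, ← MeasurableEquiv.coe_toLp, integrable_map_equiv]
  exact Integrable.fintype_prod fun k => integrable_pow_gaussianReal 0 1 (a k)

lemma integral_prod_pow_stdGaussian (a : Fin M → ℕ) :
    ∫ u, ∏ k, u k ^ a k ∂stdGaussian M = ∏ k, ∫ x, x ^ a k ∂gaussianReal 0 1 := by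
  rw [_root_.stdGaussian, ← MeasurableEquiv.coe_toLp, integral_map_equiv]
  exact integral_fintype_prod_eq_prod (fun k x => x ^ a k)

lemma sq_mul_sq_eq_prod_pow (u : EuclideanSpace ℝ (Fin M)) (i j : Fin M) :
    u i ^ 2 * u j ^ 2 = ∏ k, u k ^ ((if k = i then 2 else 0) + (if k = j then 2 else 0)) := by
  simp only [pow_add, Finset.prod_mul_distrib, pow_ite, pow_zero, Finset.prod_ite_eq',
    Finset.mem_univ, if_true]

lemma integral_sq_mul_sq_stdGaussian (i j : Fin M) :
    ∫ u, u i ^ 2 * u j ^ 2 ∂stdGaussian M = if i = j then 3 else 1 := by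
  have hmoment : ∀ k, ∫ x, x ^ ((if k = i then 2 else 0) + (if k = j then 2 else 0))
      ∂gaussianReal 0 1 = if k = i ∧ k = j then 3 else 1 := fun k => by
    by_cases hi : k = i <;> by_cases hj : k = j
    · rw [if_pos hi, if_pos hj, if_pos ⟨hi, hj⟩]; exact integral_pow_four_gaussianReal_zero_one
    · rw [if_pos hi, if_neg hj, if_neg fun h => hj h.2]; exact integral_sq_gaussianReal_zero_one
    · rw [if_neg hi, if_pos hj, if_neg fun h => hi h.1]; exact integral_sq_gaussianReal_zero_one
    · rw [if_neg hi, if_neg hj, if_neg fun h => hi h.1]; simp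
  simp_rw [sq_mul_sq_eq_prod_pow, integral_prod_pow_stdGaussian, hmoment]
  split_ifs with hij
  · subst hij
    simp
  · exact Finset.prod_eq_one fun k _ => if_neg fun (h : k = i ∧ k = j) => hij (h.1.symm.trans h.2)

lemma norm_pow_four_eq_sum_sq_mul_sq (u : EuclideanSpace ℝ (Fin M)) :
    ‖u‖ ^ 4 = ∑ i, ∑ j, u i ^ 2 * u j ^ 2 := by
  have h : ‖u‖ ^ 2 = ∑ i, u i ^ 2 := by simp [EuclideanSpace.norm_sq_eq]
  rw [show ‖u‖ ^ 4 = ‖u‖ ^ 2 * ‖u‖ ^ 2 by ring, h, Finset.sum_mul_sum]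

lemma integrable_sq_mul_sq_stdGaussian (i j : Fin M) :
    Integrable (fun u : EuclideanSpace ℝ (Fin M) => u i ^ 2 * u j ^ 2) (stdGaussian M) := by
  simp_rw [sq_mul_sq_eq_prod_pow]
  exact integrable_prod_pow_stdGaussian _

lemma integrable_norm_pow_four_stdGaussian :
    Integrable (fun u : EuclideanSpace ℝ (Fin M) => ‖u‖ ^ 4) (stdGaussian M) := by
  simp_rw [norm_pow_four_eq_sum_sq_mul_sq]
  exact integrable_finsetSum _ fun i _ =>
    integrable_finsetSum _ fun j _ => integrable_sq_mul_sq_stdGaussian i j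

lemma integral_norm_pow_four_stdGaussian :
    ∫ u, ‖u‖ ^ 4 ∂stdGaussian M = (M : ℝ) ^ 2 + 2 * M := by
  simp_rw [norm_pow_four_eq_sum_sq_mul_sq]
  rw [integral_finsetSum _ fun i _ =>
    integrable_finsetSum _ fun j _ => integrable_sq_mul_sq_stdGaussian i j]
  simp_rw [integral_finsetSum _ fun j _ => integrable_sq_mul_sq_stdGaussian _ j,
    integral_sq_mul_sq_stdGaussian]
  have hrow : ∀ i : Fin M, ∑ j : Fin M, (if i = j then (3 : ℝ) else 1) = M + 2 := by
    intro i
    have h3 : ∀ j, (if i = j then (3 : ℝ) else 1) = 1 + if i = j then 2 else 0 := fun j => by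
      split_ifs <;> norm_num
    simp only [h3, Finset.sum_add_distrib, Finset.sum_ite_eq, Finset.mem_univ, if_true]
    simp
  simp [hrow]
  ring

end StdGaussian

lemma integral_prod_le_of_forall_integral_le {X Y : Type*} [MeasurableSpace X]
    [MeasurableSpace Y] {ν : Measure X} {ρ : Measure Y} [SFinite ν] [SFinite ρ]
    {g : X × Y → ℝ} (hg : 0 ≤ g) {b : X → ℝ} (hgb : ∀ x, ∫ y, g (x, y) ∂ρ ≤ b x)
    (hb : Integrable b ν) :
    ∫ p, g p ∂ν.prod ρ ≤ ∫ x, b x ∂ν := by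
  by_cases hgi : Integrable g (ν.prod ρ)
  · rw [integral_prod g hgi]
    exact integral_mono hgi.integral_prod_left hb hgb
  · rw [integral_undef hgi]
    exact integral_nonneg fun x => (integral_nonneg fun y => hg (x, y)).trans (hgb x)

lemma ProbabilityTheory.IndepFun.integral_comp_prodMk {Ω β γ E : Type*} [MeasurableSpace Ω]
    [MeasurableSpace β] [MeasurableSpace γ] [NormedAddCommGroup E] [NormedSpace ℝ E]
    {P : Measure Ω} [IsFiniteMeasure P] {U : Ω → β} {H : Ω → γ} (hUH : IndepFun U H P)
    (hU : AEMeasurable U P) (hH : AEMeasurable H P) {φ : β × γ → E}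
    (hφ : AEStronglyMeasurable φ ((P.map U).prod (P.map H))) :
    ∫ ω, φ (U ω, H ω) ∂P = ∫ p, φ p ∂(P.map U).prod (P.map H) := by
  rw [← hUH.map_prod_eq_prod_map_map hU hH] at hφ ⊢
  exact (integral_map (hU.prodMk hH) hφ).symm

lemma integral_norm_diffQuot_smul_sq_le {E α : Type*} [SeminormedAddCommGroup E] [NormedSpace ℝ E]
    [MeasurableSpace α] {ρ : Measure α} {F : E → α → ℝ} {L : ℝ}
    (hlip : ∀ θ₁ θ₂, ∫ h, (F θ₁ h - F θ₂ h) ^ 2 ∂ρ ≤ (L * ‖θ₁ - θ₂‖) ^ 2)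
    (θ u : E) (μ : ℝ) :
    ∫ h, ‖((F (θ + μ • u) h - F θ h) / μ) • u‖ ^ 2 ∂ρ ≤ L ^ 2 * ‖u‖ ^ 4 := by
  have hμu : ‖θ + μ • u - θ‖ ^ 2 = μ ^ 2 * ‖u‖ ^ 2 := by
    rw [add_sub_cancel_left, norm_smul, mul_pow, Real.norm_eq_abs, sq_abs]
  calc ∫ h, ‖((F (θ + μ • u) h - F θ h) / μ) • u‖ ^ 2 ∂ρ
      = (∫ h, (F (θ + μ • u) h - F θ h) ^ 2 ∂ρ) * (‖u‖ ^ 2 / μ ^ 2) := by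
        simp_rw [norm_smul, mul_pow, Real.norm_eq_abs, sq_abs, ← integral_mul_const]
        congr 1; funext h; ring
    _ ≤ (L * ‖θ + μ • u - θ‖) ^ 2 * (‖u‖ ^ 2 / μ ^ 2) := by gcongr; exact hlip _ _
    _ = L ^ 2 * ‖u‖ ^ 4 * (μ ^ 2 / μ ^ 2) := by rw [mul_pow, hμu]; ring
    -- for `μ = 0` both the difference quotient and `μ ^ 2 / μ ^ 2` are `0`
    _ ≤ L ^ 2 * ‖u‖ ^ 4 := mul_le_of_le_one_right (by positivity) (div_self_le_one _)

lemma measurable_norm_diffQuot_smul_sq {E α : Type*} [NormedAddCommGroup E] [NormedSpace ℝ E]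
    [MeasurableSpace E] [BorelSpace E] [SecondCountableTopology E] [MeasurableSpace α]
    {F : E → α → ℝ} (hF : Measurable (Function.uncurry F)) (θ : E) (μ : ℝ) :
    Measurable fun p : E × α => ‖((F (θ + μ • p.1) p.2 - F θ p.2) / μ) • p.1‖ ^ 2 := by
  have hshift : Measurable fun p : E × α => F (θ + μ • p.1) p.2 :=
    hF.comp (((measurable_fst.const_smul μ).const_add θ).prodMk measurable_snd)
  have hbase : Measurable fun p : E × α => F θ p.2 :=
    hF.of_uncurry_left.comp measurable_snd
  exact ((((hshift.sub hbase).div_const μ).smul measurable_fst).norm).pow_const 2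

theorem stochastic_finite_difference_second_moment_general
    {Ω : Type*} [MeasurableSpace Ω] (P : Measure Ω) [IsProbabilityMeasure P]
    {α : Type*} [MeasurableSpace α] (H : Ω → α) (hH : Measurable H)
    (M : ℕ) (U : Ω → EuclideanSpace ℝ (Fin M)) (hU : Measurable U)
    (hUlaw : Measure.map U P = stdGaussian M)
    (hindep : IndepFun U H P)
    (F : EuclideanSpace ℝ (Fin M) → α → ℝ) (L : ℝ)
    (hFmeas : Measurable (Function.uncurry F))
    (hlip : ∀ θ₁ θ₂ : EuclideanSpace ℝ (Fin M),
      (∫ ω, (F θ₁ (H ω) - F θ₂ (H ω)) ^ 2 ∂P) ≤ (L * ‖θ₁ - θ₂‖) ^ 2)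
    (μ : ℝ) (θ : EuclideanSpace ℝ (Fin M)) :
    (∫ ω, ‖((F (θ + μ • U ω) (H ω) - F θ (H ω)) / μ) • U ω‖ ^ 2 ∂P) ≤
        L ^ 2 * ∫ u, ‖u‖ ^ 4 ∂(stdGaussian M) ∧
      (∫ ω, ‖((F (θ + μ • U ω) (H ω) - F θ (H ω)) / μ) • U ω‖ ^ 2 ∂P) ≤
        L ^ 2 * ((M : ℝ) + 4) ^ 2 := by
  have hlipH : ∀ θ₁ θ₂, ∫ h, (F θ₁ h - F θ₂ h) ^ 2 ∂P.map H ≤ (L * ‖θ₁ - θ₂‖) ^ 2 :=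
    fun θ₁ θ₂ => (integral_map (f := fun h => (F θ₁ h - F θ₂ h) ^ 2) hH.aemeasurable
      ((hFmeas.of_uncurry_left.sub hFmeas.of_uncurry_left).pow_const 2).aestronglyMeasurable
      ).trans_le (hlip θ₁ θ₂)
  have hmoment : ∫ ω, ‖((F (θ + μ • U ω) (H ω) - F θ (H ω)) / μ) • U ω‖ ^ 2 ∂P ≤
      L ^ 2 * ∫ u, ‖u‖ ^ 4 ∂stdGaussian M := by
    calc _ = ∫ p, ‖((F (θ + μ • p.1) p.2 - F θ p.2) / μ) • p.1‖ ^ 2 ∂(P.map U).prod (P.map H) :=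
          hindep.integral_comp_prodMk hU.aemeasurable hH.aemeasurable
            (measurable_norm_diffQuot_smul_sq hFmeas θ μ).aestronglyMeasurable
      _ ≤ ∫ u, L ^ 2 * ‖u‖ ^ 4 ∂P.map U :=
          integral_prod_le_of_forall_integral_le (fun p => by positivity)
            (fun u => integral_norm_diffQuot_smul_sq_le hlipH θ u μ)
            (hUlaw ▸ integrable_norm_pow_four_stdGaussian.const_mul _)
      _ = _ := by rw [hUlaw, integral_const_mul]
  refine ⟨hmoment, hmoment.trans ?_⟩
  rw [integral_norm_pow_four_stdGaussian]
  gcongr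
  nlinarith [(M.cast_nonneg : (0 : ℝ) ≤ M)]

/-- Second moment bound for the stochastic zeroth-order gradient estimator of a
mean-square Lipschitz expectation:
`E‖((F(θ+μU,H) − F(θ,H))/μ) U‖² ≤ L² E‖U‖⁴ ≤ L²(M+4)²`. -/
theorem stochastic_finite_difference_second_moment
    {Ω : Type*} [MeasurableSpace Ω] (P : Measure Ω) [IsProbabilityMeasure P]
    {α : Type*} [MeasurableSpace α] (H : Ω → α) (hH : Measurable H)
    (M : ℕ) (U : Ω → EuclideanSpace ℝ (Fin M)) (hU : Measurable U)
    (hUlaw : Measure.map U P = stdGaussian M)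
    (hindep : IndepFun U H P)
    (F : EuclideanSpace ℝ (Fin M) → α → ℝ) (L : ℝ)
    (hFmeas : Measurable (Function.uncurry F))
    (hlip : ∀ θ₁ θ₂ : EuclideanSpace ℝ (Fin M),
      (∫ ω, (F θ₁ (H ω) - F θ₂ (H ω)) ^ 2 ∂P) ≤ (L * ‖θ₁ - θ₂‖) ^ 2)
    (μ : ℝ) (hμ : 0 < μ) (θ : EuclideanSpace ℝ (Fin M)) :
    (∫ ω, ‖((F (θ + μ • U ω) (H ω) - F θ (H ω)) / μ) • U ω‖ ^ 2 ∂P) ≤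
        L ^ 2 * ∫ u, ‖u‖ ^ 4 ∂(stdGaussian M) ∧
      (∫ ω, ‖((F (θ + μ • U ω) (H ω) - F θ (H ω)) / μ) • U ω‖ ^ 2 ∂P) ≤
        L ^ 2 * ((M : ℝ) + 4) ^ 2 :=
  stochastic_finite_difference_second_moment_general P H hH M U hU hUlaw hindep F L hFmeas hlip μ θ
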